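/- arXiv:1906.00461 — 4 statements merged into one kernel-verified Lean document; each statement's English description precedes it below -/
import Mathlib

section
/- Let u : ℝ → ℝ^N be continuously differentiable with u and u̇ square-integrable. Then for every natural number n and every t ∈ ℝ, one has |u(t)| ≤ (1/√(2n+3)) (∫_t^{t+1} |u̇(τ)|² dτ)^{1/2} + (n+1) ∫_t^{t+1} |u(τ)| dτ. -/
open MeasureTheory Real

/-- For `u ∈ C¹(ℝ, ℝ^N)` with `u, u̇ ∈ L²`, for every `n : ℕ` and `t : ℝ`,
`|u(t)| ≤ (2n+3)^{-1/2} (∫_t^{t+1}|u̇|²)^{1/2} + (n+1)∫_t^{t+1}|u|`. -/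
theorem stmt_0 {N : ℕ} (u : ℝ → EuclideanSpace ℝ (Fin N))
    (hu : ContDiff ℝ 1 u)
    (huL2 : MemLp u 2 (volume : Measure ℝ))
    (hu'L2 : MemLp (deriv u) 2 (volume : Measure ℝ)) :
    ∀ (n : ℕ) (t : ℝ),
      ‖u t‖ ≤ (1 / Real.sqrt (2 * n + 3)) *
          (∫ τ in t..(t + 1), ‖deriv u τ‖ ^ 2) ^ ((1 : ℝ) / 2) +
        (n + 1) * ∫ τ in t..(t + 1), ‖u τ‖ := by
  intro n t
  have hc : Continuous u := hu.continuous
  have hc' : Continuous (deriv u) := hu.continuous_deriv le_rfl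
  set F' : ℝ → EuclideanSpace ℝ (Fin N) := fun τ =>
    (-((n + 1 : ℝ) * (t + 1 - τ) ^ n)) • u τ + ((t + 1 - τ) ^ (n + 1)) • deriv u τ with hF'
  have hderiv : ∀ τ : ℝ, HasDerivAt (fun τ => ((t + 1 - τ) ^ (n + 1)) • u τ) (F' τ) τ := by
    intro τ
    have h1 : HasDerivAt (fun τ : ℝ => t + 1 - τ) (-1) τ := (hasDerivAt_id τ).const_sub (t + 1)
    have h2 : HasDerivAt (fun τ : ℝ => (t + 1 - τ) ^ (n + 1))
        ((n + 1 : ℕ) * (t + 1 - τ) ^ n * (-1)) τ := by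
      simpa using h1.fun_pow (n + 1)
    have h3 : HasDerivAt u (deriv u τ) τ :=
      ((hu.differentiable one_ne_zero) τ).hasDerivAt
    have := h2.fun_smul h3
    refine this.congr_deriv ?_
    push_cast
    simp only [hF', mul_neg_one]
    exact add_comm _ _
  have hF'cont : Continuous F' := by
    fun_prop
  have hFTC : ∫ τ in t..(t + 1), F' τ = -u t := by
    rw [intervalIntegral.integral_eq_sub_of_hasDerivAt (fun τ _ => hderiv τ)
      (hF'cont.intervalIntegrable _ _)]
    simp
  have hle : t ≤ t + 1 := by linarith
  have hnorm : ‖u t‖ ≤ ∫ τ in t..(t + 1), ‖F' τ‖ := by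
    calc ‖u t‖ = ‖∫ τ in t..(t + 1), F' τ‖ := by rw [hFTC, norm_neg]
    _ ≤ ∫ τ in t..(t + 1), ‖F' τ‖ := intervalIntegral.norm_integral_le_integral_norm hle
  -- pointwise bound
  have hpt : ∀ τ ∈ Set.Icc t (t + 1),
      ‖F' τ‖ ≤ (t + 1 - τ) ^ (n + 1) * ‖deriv u τ‖ + (n + 1 : ℝ) * ‖u τ‖ := by
    intro τ hτ
    have h0 : (0:ℝ) ≤ t + 1 - τ := by linarith [hτ.2]
    have h1 : t + 1 - τ ≤ 1 := by linarith [hτ.1]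
    have hpow : (t + 1 - τ) ^ n ≤ 1 := pow_le_one₀ h0 h1
    calc ‖F' τ‖ ≤ ‖(-((n + 1 : ℝ) * (t + 1 - τ) ^ n)) • u τ‖
          + ‖((t + 1 - τ) ^ (n + 1)) • deriv u τ‖ := norm_add_le _ _
    _ = ((n + 1 : ℝ) * (t + 1 - τ) ^ n) * ‖u τ‖
          + (t + 1 - τ) ^ (n + 1) * ‖deriv u τ‖ := by
        rw [norm_smul, norm_smul, norm_neg]
        rw [Real.norm_of_nonneg (by positivity), Real.norm_of_nonneg (by positivity)]
    _ ≤ (n + 1 : ℝ) * ‖u τ‖ + (t + 1 - τ) ^ (n + 1) * ‖deriv u τ‖ := by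
        gcongr
        nlinarith [norm_nonneg (u τ)]
    _ = _ := by ring
  have hint1 : IntervalIntegrable (fun τ => (t + 1 - τ) ^ (n + 1) * ‖deriv u τ‖) volume t (t+1) := by
    apply Continuous.intervalIntegrable; fun_prop
  have hint2 : IntervalIntegrable (fun τ => (n + 1 : ℝ) * ‖u τ‖) volume t (t+1) := by
    apply Continuous.intervalIntegrable; fun_prop
  have hmono : (∫ τ in t..(t + 1), ‖F' τ‖)
      ≤ ∫ τ in t..(t + 1), ((t + 1 - τ) ^ (n + 1) * ‖deriv u τ‖ + (n + 1 : ℝ) * ‖u τ‖) := by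
    apply intervalIntegral.integral_mono_on hle _ (hint1.add hint2) hpt
    exact (hF'cont.norm).intervalIntegrable _ _
  have hsplit : (∫ τ in t..(t + 1), ((t + 1 - τ) ^ (n + 1) * ‖deriv u τ‖ + (n + 1 : ℝ) * ‖u τ‖))
      = (∫ τ in t..(t + 1), (t + 1 - τ) ^ (n + 1) * ‖deriv u τ‖)
        + (n + 1 : ℝ) * ∫ τ in t..(t + 1), ‖u τ‖ := by
    rw [intervalIntegral.integral_add hint1 hint2, intervalIntegral.integral_const_mul]
  -- Cauchy-Schwarz
  have hCS : (∫ τ in t..(t + 1), (t + 1 - τ) ^ (n + 1) * ‖deriv u τ‖)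
      ≤ (1 / Real.sqrt (2 * n + 3)) * (∫ τ in t..(t + 1), ‖deriv u τ‖ ^ 2) ^ ((1 : ℝ) / 2) := by
    haveI : IsFiniteMeasure (volume.restrict (Set.Ioc t (t + 1))) :=
      ⟨by rw [Measure.restrict_apply_univ]; simp [Real.volume_Ioc]⟩
    have hconj : Real.HolderConjugate 2 2 := Real.HolderConjugate.two_two
    have hfm : MemLp (fun τ => (t + 1 - τ) ^ (n + 1)) (ENNReal.ofReal 2)
        (volume.restrict (Set.Ioc t (t + 1))) := by
      apply MemLp.of_bound ((by fun_prop : Continuous fun τ : ℝ => (t + 1 - τ) ^ (n + 1)).aestronglyMeasurable) 1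
      rw [ae_restrict_iff' measurableSet_Ioc]
      filter_upwards with τ hτ
      rw [Real.norm_of_nonneg (by nlinarith [hτ.2, pow_nonneg (show (0:ℝ) ≤ t+1-τ by linarith [hτ.2]) (n+1)] : (0:ℝ) ≤ (t+1-τ)^(n+1))]
      exact pow_le_one₀ (by linarith [hτ.2]) (by linarith [hτ.1])
    have hgm : MemLp (fun τ => ‖deriv u τ‖) (ENNReal.ofReal 2)
        (volume.restrict (Set.Ioc t (t + 1))) := by
      obtain ⟨C, hC⟩ := (isCompact_Icc (a := t) (b := t + 1)).exists_bound_of_continuousOn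
        (hc'.norm.continuousOn)
      apply MemLp.of_bound hc'.norm.aestronglyMeasurable C
      rw [ae_restrict_iff' measurableSet_Ioc]
      filter_upwards with τ hτ
      simpa using hC τ (Set.Ioc_subset_Icc_self hτ)
    have hH := MeasureTheory.integral_mul_le_Lp_mul_Lq_of_nonneg hconj
      (f := fun τ => (t + 1 - τ) ^ (n + 1)) (g := fun τ => ‖deriv u τ‖)
      (μ := volume.restrict (Set.Ioc t (t + 1)))
      (by refine (ae_restrict_iff' measurableSet_Ioc).2 ?_
          filter_upwards with τ hτ
          exact pow_nonneg (by linarith [hτ.2]) _)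
      (by filter_upwards with τ using norm_nonneg _) hfm hgm
    rw [intervalIntegral.integral_of_le hle]
    have e1 : (∫ a in Set.Ioc t (t + 1), ((t + 1 - a) ^ (n + 1)) ^ (2:ℝ))
        = 1 / (2 * (n:ℝ) + 3) := by
      have : ∀ a : ℝ, ((t + 1 - a) ^ (n + 1)) ^ (2:ℝ) = (t + 1 - a) ^ (2 * (n + 1)) := by
        intro a; rw [Real.rpow_two, ← pow_mul, mul_comm]
      simp_rw [this]
      rw [← intervalIntegral.integral_of_le hle,
        intervalIntegral.integral_comp_sub_left (fun s => s ^ (2 * (n + 1))) (t + 1)]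
      simp only [sub_self, add_sub_cancel_left]
      rw [integral_pow]
      push_cast; ring_nf
    have e2 : (∫ a in Set.Ioc t (t + 1), ‖deriv u a‖ ^ (2:ℝ))
        = ∫ τ in t..(t + 1), ‖deriv u τ‖ ^ 2 := by
      simp_rw [Real.rpow_two]
      rw [intervalIntegral.integral_of_le hle]
    rw [e1, e2] at hH
    have e3 : (1 / (2 * (n:ℝ) + 3)) ^ ((1:ℝ)/2) = 1 / Real.sqrt (2 * n + 3) := by
      rw [← Real.sqrt_eq_rpow, one_div, one_div, Real.sqrt_inv]
    rw [e3] at hH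
    exact hH
  calc ‖u t‖ ≤ ∫ τ in t..(t + 1), ‖F' τ‖ := hnorm
  _ ≤ _ := hmono
  _ = _ := hsplit
  _ ≤ _ := add_le_add hCS le_rfl
end

section
/- Let v : ℝ → ℝ^N be measurable, let 1 < η < α, let R > e, and let D ⊆ {t : |t| ≥ R} be measurable. Suppose (L(t)v(t), v(t)) ≥ M |t| (ln|t|)^α |v(t)|² for a.e. t ∈ {|t| ≥ R} \ D, where M > 0 and L(t) is a symmetric matrix for each t. Then ∫_{\{|t|≥R\} \setminus D} |v(t)| dt ≤ ∫_{\{|t|≥R\}} dt/(|t|(ln|t|)^η) + (1/(M (ln R)^{α−η})) ∫_{\{|t|≥R\} \setminus D} (L(t)v(t), v(t)) dt. -/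
open MeasureTheory Real Matrix Set

set_option maxHeartbeats 1000000 in
lemma aux_int {η R : ℝ} (hη : 1 < η) (hR : Real.exp 1 < R) :
    IntegrableOn (fun t : ℝ => 1 / (t * Real.log t ^ η)) (Set.Ioi R) volume := by
  have hR1 : (1 : ℝ) < R := lt_trans (by simpa using Real.exp_lt_exp.2 one_pos) hR
  have hlogR : 1 < Real.log R := (Real.lt_log_iff_exp_lt (by linarith)).2 hR
  have hderiv : ∀ x ∈ Set.Ici R, HasDerivAt
      (fun t : ℝ => Real.log t ^ (1 - η) * (1 - η)⁻¹)
      (1 / (x * Real.log x ^ η)) x := by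
    intro x hx
    have hx1 : (1:ℝ) < x := lt_of_lt_of_le hR1 hx
    have hlx : 1 ≤ Real.log x := le_trans hlogR.le (Real.log_le_log (by linarith) hx)
    have h1 : HasDerivAt Real.log x⁻¹ x := Real.hasDerivAt_log (by linarith)
    have h2 : HasDerivAt (fun u : ℝ => u ^ (1 - η)) ((1 - η) * Real.log x ^ (1 - η - 1)) (Real.log x) :=
      Real.hasDerivAt_rpow_const (Or.inl (by linarith))
    have h3 := (h2.comp x h1).mul_const (1 - η)⁻¹
    refine (HasDerivAt.congr_deriv h3 ?_).congr_of_eventuallyEq (Filter.Eventually.of_forall fun _ => rfl)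
    symm
    have hηne : (1 - η) ≠ 0 := by linarith
    have hlx0 : (0:ℝ) < Real.log x := by linarith
    have he : (1 - η - 1 : ℝ) = -η := by ring
    rw [he, Real.rpow_neg hlx0.le]
    field_simp
  have hpos : ∀ x ∈ Set.Ioi R, 0 ≤ 1 / (x * Real.log x ^ η) := by
    intro x hx
    have hx1 : (1:ℝ) < x := lt_trans hR1 hx
    have hlx : 0 < Real.log x := Real.log_pos hx1
    positivity
  have h0 : Filter.Tendsto (fun u : ℝ => u ^ (1 - η)) Filter.atTop (nhds 0) := by
    have := tendsto_rpow_neg_atTop (y := η - 1) (by linarith)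
    simpa [neg_sub] using this
  have htend : Filter.Tendsto (fun t : ℝ => Real.log t ^ (1 - η) * (1 - η)⁻¹)
      Filter.atTop (nhds 0) := by
    simpa using (h0.comp Real.tendsto_log_atTop).mul_const (1 - η)⁻¹
  exact integrableOn_Ioi_deriv_of_nonneg' hderiv hpos htend

set_option maxHeartbeats 1000000 in
theorem stmt_9 {N : ℕ} (v : ℝ → Fin N → ℝ) (L : ℝ → Matrix (Fin N) (Fin N) ℝ)
    (η α R M : ℝ) (hη : 1 < η) (hηα : η < α) (hR : Real.exp 1 < R) (hM : 0 < M)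
    (hsymm : ∀ t, (L t).IsSymm)
    (D : Set ℝ) (hD : MeasurableSet D) (hDsub : D ⊆ {t : ℝ | R ≤ |t|})
    (hmeas : AEStronglyMeasurable v (volume : Measure ℝ))
    (hint1 : IntegrableOn (fun t => Real.sqrt (∑ i, v t i ^ 2)) ({t : ℝ | R ≤ |t|} \ D) volume)
    (hint2 : IntegrableOn (fun t => (L t).mulVec (v t) ⬝ᵥ v t) ({t : ℝ | R ≤ |t|} \ D) volume)
    (hlow : ∀ᵐ t ∂(volume.restrict ({t : ℝ | R ≤ |t|} \ D)),
      M * |t| * (Real.log |t|) ^ α * (∑ i, v t i ^ 2) ≤ (L t).mulVec (v t) ⬝ᵥ v t) :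
    ∫ t in {t : ℝ | R ≤ |t|} \ D, Real.sqrt (∑ i, v t i ^ 2) ≤
      (∫ t in {t : ℝ | R ≤ |t|}, 1 / (|t| * (Real.log |t|) ^ η)) +
        (1 / (M * (Real.log R) ^ (α - η))) *
          ∫ t in {t : ℝ | R ≤ |t|} \ D, (L t).mulVec (v t) ⬝ᵥ v t := by
  have hRpos : (0:ℝ) < R := lt_trans (Real.exp_pos 1) hR
  have hR1 : (1:ℝ) < R := lt_trans (by simp) hR
  have hlogR : 1 < Real.log R := (Real.lt_log_iff_exp_lt hRpos).2 hR
  set B : Set ℝ := {t : ℝ | R ≤ |t|} with hB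
  set S : Set ℝ := B \ D with hS
  set f : ℝ → ℝ := fun t => 1 / (|t| * Real.log |t| ^ η) with hf
  set g : ℝ → ℝ := fun t => (L t).mulVec (v t) ⬝ᵥ v t with hg
  set c : ℝ := 1 / (M * Real.log R ^ (α - η)) with hc
  have hcpos : 0 < c := by
    have : (0:ℝ) < Real.log R ^ (α - η) := Real.rpow_pos_of_pos (by linarith) _
    positivity
  have hBmeas : MeasurableSet B := (isClosed_le continuous_const continuous_abs).measurableSet
  have hSmeas : MeasurableSet S := hBmeas.diff hD
  -- integrability of f on B
  have hfB : IntegrableOn f B volume := by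
    have hBeq : B = Set.Iic (-R) ∪ Set.Ici R := by
      ext t
      simp only [hB, Set.mem_setOf_eq, Set.mem_union, Set.mem_Iic, Set.mem_Ici, le_abs]
      constructor
      · rintro (h | h)
        · exact Or.inr h
        · exact Or.inl (by linarith)
      · rintro (h | h)
        · exact Or.inr (by linarith)
        · exact Or.inl h
    have hIci : IntegrableOn f (Set.Ici R) volume := by
      rw [integrableOn_Ici_iff_integrableOn_Ioi]
      refine (aux_int hη hR).congr_fun (fun t ht => ?_) measurableSet_Ioi
      have : (0:ℝ) < t := lt_trans hRpos ht
      simp [hf, abs_of_pos this]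
    have hIic : IntegrableOn f (Set.Iic (-R)) volume := by
      have hpre : Set.Iic (-R) = Neg.neg ⁻¹' (Set.Ici R) := by
        ext t
        simp only [Set.mem_preimage, Set.mem_Iic, Set.mem_Ici]
        constructor <;> intro <;> linarith
      have heq : f = f ∘ Neg.neg := by funext t; simp [hf, Function.comp]
      rw [hpre, heq]
      exact ((Measure.measurePreserving_neg (volume : Measure ℝ)).integrableOn_comp_preimage
          (Homeomorph.neg ℝ).measurableEmbedding).2 hIci
    rw [hBeq]
    exact hIic.union hIci
  -- pointwise a.e. bound
  have hkey : ∀ᵐ t ∂(volume.restrict S),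
      Real.sqrt (∑ i, v t i ^ 2) ≤ f t + c * g t := by
    filter_upwards [hlow, ae_restrict_mem hSmeas] with t h1 h2
    have htR : R ≤ |t| := h2.1
    have ht1 : (1:ℝ) < |t| := lt_of_lt_of_le hR1 htR
    have ht0 : (0:ℝ) < |t| := by linarith
    have hlt : 1 < Real.log |t| := lt_of_lt_of_le hlogR (Real.log_le_log (by linarith) htR)
    have hlt0 : (0:ℝ) < Real.log |t| := by linarith
    set x := Real.sqrt (∑ i, v t i ^ 2) with hx
    have hxnn : 0 ≤ x := Real.sqrt_nonneg _
    have hsum : (0:ℝ) ≤ ∑ i, v t i ^ 2 := by positivity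
    have hx2 : x ^ 2 = ∑ i, v t i ^ 2 := Real.sq_sqrt hsum
    have hlα : (0:ℝ) < Real.log |t| ^ α := Real.rpow_pos_of_pos hlt0 _
    have hlη : (0:ℝ) < Real.log |t| ^ η := Real.rpow_pos_of_pos hlt0 _
    have hgnn : 0 ≤ g t :=
      le_trans (mul_nonneg (mul_nonneg (mul_nonneg hM.le ht0.le) hlα.le) hsum) h1
    have hfnn : 0 ≤ f t := by
      have : (0:ℝ) < |t| * Real.log |t| ^ η := mul_pos ht0 hlη
      simp only [hf]
      positivity
    set w := |t| * Real.log |t| ^ η with hw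
    have hwpos : 0 < w := mul_pos ht0 hlη
    by_cases hcase : w * x ≤ 1
    · have hxle : x ≤ f t := by
        simp only [hf, ← hw]
        rw [le_div_iff₀ hwpos]
        linarith [hcase]
      nlinarith [mul_nonneg hcpos.le hgnn]
    · push_neg at hcase
      have hx1 : x ≤ w * x ^ 2 := by nlinarith
      have h1' : M * |t| * Real.log |t| ^ α * x ^ 2 ≤ g t := by rw [hx2]; exact h1
      have hsplit : w * x ^ 2 = |t| * Real.log |t| ^ α * x ^ 2 * Real.log |t| ^ (η - α) := by
        have hηe : Real.log |t| ^ η = Real.log |t| ^ α * Real.log |t| ^ (η - α) := by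
          rw [← Real.rpow_add hlt0]
          congr 1
          ring
        rw [hw, hηe]
        ring
      have hmono : Real.log |t| ^ (η - α) ≤ Real.log R ^ (η - α) :=
        Real.rpow_le_rpow_of_nonpos (by linarith) (Real.log_le_log (by linarith) htR)
          (by linarith)
      have h2' : |t| * Real.log |t| ^ α * x ^ 2 ≤ g t / M := by
        rw [le_div_iff₀ hM]
        nlinarith [h1']
      have hWnn : 0 ≤ |t| * Real.log |t| ^ α * x ^ 2 :=
        mul_nonneg (mul_nonneg ht0.le hlα.le) (sq_nonneg x)
      have hbig : w * x ^ 2 ≤ g t / M * Real.log R ^ (η - α) := by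
        rw [hsplit]
        exact mul_le_mul h2' hmono (Real.rpow_nonneg (by linarith) _)
          (div_nonneg hgnn hM.le)
      have hRpow : (0:ℝ) < Real.log R ^ (α - η) := Real.rpow_pos_of_pos (by linarith) _
      have hcg : g t / M * Real.log R ^ (η - α) = c * g t := by
        have hneg : Real.log R ^ (η - α) = (Real.log R ^ (α - η))⁻¹ := by
          rw [← Real.rpow_neg (by linarith : (0:ℝ) ≤ Real.log R), neg_sub]
        rw [hneg, hc]
        field_simp
      have : x ≤ c * g t := by
        calc x ≤ w * x ^ 2 := hx1
          _ ≤ g t / M * Real.log R ^ (η - α) := hbig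
          _ = c * g t := hcg
      linarith
  -- conclude
  have hfS : IntegrableOn f S volume := hfB.mono_set Set.diff_subset
  have hFS : IntegrableOn (fun t => f t + c * g t) S volume := hfS.add (hint2.const_mul c)
  have hf0 : 0 ≤ᵐ[volume.restrict B] f := by
    filter_upwards [ae_restrict_mem hBmeas] with t ht
    have ht1 : (1:ℝ) < |t| := lt_of_lt_of_le hR1 ht
    have hlt0 : (0:ℝ) < Real.log |t| := Real.log_pos ht1
    have : (0:ℝ) < |t| * Real.log |t| ^ η :=
      mul_pos (by linarith) (Real.rpow_pos_of_pos hlt0 _)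
    simp only [hf]
    positivity
  calc ∫ t in S, Real.sqrt (∑ i, v t i ^ 2)
      ≤ ∫ t in S, (f t + c * g t) := integral_mono_ae hint1 hFS hkey
    _ = (∫ t in S, f t) + c * ∫ t in S, g t := by
        rw [integral_add hfS (hint2.const_mul c)]
        rw [integral_const_mul c]
    _ ≤ (∫ t in B, f t) + c * ∫ t in S, g t := by
        have := setIntegral_mono_set hfB hf0
          (HasSubset.Subset.eventuallyLE (Set.diff_subset : S ⊆ B))
        linarith
end

section
/- Let E be a real Hilbert space with orthogonal decomposition E = E⁻ ⊕ E⁰ ⊕ E⁺ where E⁻ ⊕ E⁰ is finite-dimensional, embedded in L²(ℝ,ℝ^N) with ‖u‖_{L²} ≤ C₂‖u‖. Suppose a sequence (u_n) ⊂ E satisfies: u_n ⇀ u₀ weakly in E, u_n → u₀ in L²(ℝ,ℝ^N), I'(u_n) → 0, and I'(u₀) is the weak limit functional, where ⟨I'(u),v⟩ = (u⁺,v⁺) − (u⁻,v⁻) − ∫_ℝ (∇W(t,u),v) dt with |∇W(t,x)| ≤ b₁|x|. Then u_n → u₀ strongly in E. -/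
open MeasureTheory Real Filter RealInnerProductSpace

section StmtAux

variable {H : Type*} [NormedAddCommGroup H] [InnerProductSpace ℝ H]

private lemma myNormToLpTwo {f : ℝ → H} (hf : MemLp f 2 (volume : Measure ℝ)) :
    ‖hf.toLp f‖ = (∫ t, ‖f t‖ ^ 2) ^ ((1 : ℝ) / 2) := by
  rw [MeasureTheory.Lp.norm_toLp, hf.eLpNorm_eq_integral_rpow_norm (by norm_num) (by norm_num)]
  rw [ENNReal.toReal_ofReal (by
    apply Real.rpow_nonneg
    exact integral_nonneg fun a => Real.rpow_nonneg (norm_nonneg _) _)]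
  rw [show (ENNReal.toReal 2) = ((2 : ℕ) : ℝ) by simp]
  simp_rw [Real.rpow_natCast]
  norm_num

private lemma myIntegrableInner {f g : ℝ → H} (hf : MemLp f 2 (volume : Measure ℝ))
    (hg : MemLp g 2 (volume : Measure ℝ)) :
    Integrable (fun t => ⟪f t, g t⟫) (volume : Measure ℝ) := by
  have h := MeasureTheory.L2.integrable_inner (𝕜 := ℝ) (hf.toLp f) (hg.toLp g)
  refine h.congr ?_
  filter_upwards [hf.coeFn_toLp, hg.coeFn_toLp] with t h1 h2
  rw [h1, h2]

private lemma myIntegralInnerLe {f g : ℝ → H} (hf : MemLp f 2 (volume : Measure ℝ))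
    (hg : MemLp g 2 (volume : Measure ℝ)) :
    |∫ t, ⟪f t, g t⟫| ≤ (∫ t, ‖f t‖ ^ 2) ^ ((1 : ℝ) / 2) * (∫ t, ‖g t‖ ^ 2) ^ ((1 : ℝ) / 2) := by
  have hFG : (∫ t, ⟪f t, g t⟫) = ⟪hf.toLp f, hg.toLp g⟫ := by
    rw [MeasureTheory.L2.inner_def]
    refine integral_congr_ae ?_
    filter_upwards [hf.coeFn_toLp, hg.coeFn_toLp] with t h1 h2
    rw [h1, h2]
  rw [hFG, ← myNormToLpTwo hf, ← myNormToLpTwo hg]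
  exact abs_real_inner_le_norm _ _

private lemma myGWBound {f g h : ℝ → H} {b : ℝ} (hb : 0 ≤ b)
    (hfh : ∀ t, ‖f t‖ ≤ b * ‖h t‖)
    (hh : MemLp h 2 (volume : Measure ℝ)) (hg : MemLp g 2 (volume : Measure ℝ)) :
    |∫ t, ⟪f t, g t⟫| ≤
      b * ((∫ t, ‖h t‖ ^ 2) ^ ((1 : ℝ) / 2) * (∫ t, ‖g t‖ ^ 2) ^ ((1 : ℝ) / 2)) := by
  have hmul : Integrable (fun t => b * (‖h t‖ * ‖g t‖)) (volume : Measure ℝ) := by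
    have h0 : Integrable (fun t => (⟪(‖h t‖ : ℝ), (‖g t‖ : ℝ)⟫ : ℝ)) (volume : Measure ℝ) :=
      myIntegrableInner (H := ℝ) hh.norm hg.norm
    simp only [RCLike.inner_apply, starRingEnd_apply, star_trivial] at h0
    exact (h0.const_mul b).congr (ae_of_all _ fun t => by ring)
  have step1 : |∫ t, ⟪f t, g t⟫| ≤ ∫ t, ‖(⟪f t, g t⟫ : ℝ)‖ := by
    rw [← Real.norm_eq_abs]
    exact norm_integral_le_integral_norm _
  have step2 : (∫ t, ‖(⟪f t, g t⟫ : ℝ)‖) ≤ ∫ t, b * (‖h t‖ * ‖g t‖) := by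
    refine integral_mono_of_nonneg (ae_of_all _ fun t => norm_nonneg _) hmul
      (ae_of_all _ fun t => ?_)
    calc ‖(⟪f t, g t⟫ : ℝ)‖ ≤ ‖f t‖ * ‖g t‖ := norm_inner_le_norm _ _
      _ ≤ (b * ‖h t‖) * ‖g t‖ := mul_le_mul_of_nonneg_right (hfh t) (norm_nonneg _)
      _ = b * (‖h t‖ * ‖g t‖) := by ring
  have step3 : (∫ t, b * (‖h t‖ * ‖g t‖)) = b * ∫ t, ‖h t‖ * ‖g t‖ := integral_const_mul _ _
  have step4 : (∫ t, ‖h t‖ * ‖g t‖) ≤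
      (∫ t, ‖h t‖ ^ 2) ^ ((1 : ℝ) / 2) * (∫ t, ‖g t‖ ^ 2) ^ ((1 : ℝ) / 2) := by
    have h5 := myIntegralInnerLe (H := ℝ) hh.norm hg.norm
    simp only [RCLike.inner_apply, starRingEnd_apply, star_trivial, Real.norm_eq_abs,
      abs_norm, sq_abs] at h5
    have e : (∫ t, ‖h t‖ * ‖g t‖) = ∫ t, ‖g t‖ * ‖h t‖ :=
      integral_congr_ae (ae_of_all _ fun t => mul_comm _ _)
    rw [e]
    exact le_trans (le_abs_self _) h5
  calc |∫ t, ⟪f t, g t⟫| ≤ ∫ t, b * (‖h t‖ * ‖g t‖) := le_trans step1 step2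
    _ = b * ∫ t, ‖h t‖ * ‖g t‖ := step3
    _ ≤ b * ((∫ t, ‖h t‖ ^ 2) ^ ((1 : ℝ) / 2) * (∫ t, ‖g t‖ ^ 2) ^ ((1 : ℝ) / 2)) :=
      mul_le_mul_of_nonneg_left step4 hb

private lemma myFinDimWeak {E : Type*} [NormedAddCommGroup E] [InnerProductSpace ℝ E]
    {F : Submodule ℝ E} [FiniteDimensional ℝ F] (v : ℕ → F)
    (h : ∀ x : E, Tendsto (fun n => ⟪((v n : E)), x⟫) atTop (nhds 0)) :
    Tendsto (fun n => (v n : E)) atTop (nhds 0) := by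
  set b := stdOrthonormalBasis ℝ F with hb
  have hv : ∀ n, (v n : E) = ∑ i, ⟪((b i : E)), (v n : E)⟫ • ((b i) : E) := by
    intro n
    conv_lhs => rw [← b.sum_repr' (v n)]
    push_cast
    rfl
  have h2 : Tendsto (fun n => ∑ i, ⟪((b i : E)), (v n : E)⟫ • ((b i) : E)) atTop (nhds 0) := by
    rw [show (0 : E) = ∑ _i : Fin (Module.finrank ℝ F), (0 : E) by simp]
    refine tendsto_finset_sum _ fun i _ => ?_
    have hc : Tendsto (fun n => ⟪((b i : E)), (v n : E)⟫) atTop (nhds 0) := by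
      have := h (b i)
      simpa [real_inner_comm] using this
    simpa using hc.smul_const ((b i : E))
  exact (tendsto_congr hv).2 h2

end StmtAux

/-- Strong convergence of a (PS)-type sequence: if `u_n ⇀ u₀` weakly in `E`,
`j u_n → j u₀` in `L²`, `I'(u_n) → 0`, where `I'` has the stated form, then
`u_n → u₀` strongly in `E`. -/
theorem stmt_10 {N : ℕ} {E : Type*} [NormedAddCommGroup E] [InnerProductSpace ℝ E]
    [CompleteSpace E]
    (Ep Em E0 : Submodule ℝ E)
    (hEpc : IsClosed (Ep : Set E)) (hfin : FiniteDimensional ℝ (Em ⊔ E0 : Submodule ℝ E))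
    (pp pm p0 : E → E)
    (hpp : ∀ u, pp u ∈ Ep) (hpm : ∀ u, pm u ∈ Em) (hp0 : ∀ u, p0 u ∈ E0)
    (hdecomp : ∀ u, u = pp u + pm u + p0 u)
    (horth : ∀ u v : E, ⟪pp u, pm v⟫ = 0 ∧ ⟪pp u, p0 v⟫ = 0 ∧ ⟪pm u, p0 v⟫ = 0)
    (j : E →ₗ[ℝ] (ℝ → EuclideanSpace ℝ (Fin N)))
    (hjL2 : ∀ u, MemLp (j u) 2 (volume : Measure ℝ))
    (C₂ : ℝ) (hC₂ : 0 < C₂)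
    (hjbound : ∀ u, (∫ t, ‖j u t‖ ^ 2) ^ ((1 : ℝ) / 2) ≤ C₂ * ‖u‖)
    (gW : ℝ → EuclideanSpace ℝ (Fin N) → EuclideanSpace ℝ (Fin N))
    (b₁ : ℝ) (hb₁ : 0 < b₁)
    (hgW : ∀ t x, ‖gW t x‖ ≤ b₁ * ‖x‖)
    (I' : E → E →L[ℝ] ℝ)
    (hI' : ∀ u v : E, I' u v =
      ⟪pp u, pp v⟫ - ⟪pm u, pm v⟫ - ∫ t, ⟪gW t (j u t), j v t⟫)
    (u : ℕ → E) (u₀ : E)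
    (hweak : ∀ v : E, Tendsto (fun n => ⟪u n, v⟫) atTop (nhds ⟪u₀, v⟫))
    (hL2conv : Tendsto (fun n => ∫ t, ‖j (u n) t - j u₀ t‖ ^ 2) atTop (nhds 0))
    (hPS : Tendsto (fun n => ‖I' (u n)‖) atTop (nhds 0)) :
    Tendsto u atTop (nhds u₀) := by
  -- weak convergence of differences to 0
  have hweak0 : ∀ x : E, Tendsto (fun n => ⟪u n - u₀, x⟫) atTop (nhds 0) := by
    intro x
    have h1 := (hweak x).sub_const ⟪u₀, x⟫
    simpa [inner_sub_left] using h1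
  -- symmetric orthogonality
  have hsym : ∀ a v : E, ⟪pm a, pp v⟫ = 0 ∧ ⟪p0 a, pp v⟫ = 0 ∧ ⟪p0 a, pm v⟫ = 0 := by
    intro a v
    refine ⟨?_, ?_, ?_⟩
    · rw [real_inner_comm]; exact (horth v a).1
    · rw [real_inner_comm]; exact (horth v a).2.1
    · rw [real_inner_comm]; exact (horth v a).2.2
  -- key projection identities
  have key1 : ∀ a v : E, ⟪a, pp v⟫ = ⟪pp a, pp v⟫ := by
    intro a v
    conv_lhs => rw [hdecomp a]
    rw [inner_add_left, inner_add_left, (hsym a v).1, (hsym a v).2.1]; ring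
  have key2 : ∀ a v : E, ⟪a, pm v⟫ = ⟪pm a, pm v⟫ := by
    intro a v
    conv_lhs => rw [hdecomp a]
    rw [inner_add_left, inner_add_left, (horth a v).1, (hsym a v).2.2]; ring
  have key0 : ∀ a v : E, ⟪a, p0 v⟫ = ⟪p0 a, p0 v⟫ := by
    intro a v
    conv_lhs => rw [hdecomp a]
    rw [inner_add_left, inner_add_left, (horth a v).2.1, (horth a v).2.2]; ring
  -- Pythagoras
  have pyth : ∀ a : E, ‖a‖ ^ 2 = ‖pp a‖ ^ 2 + ‖pm a‖ ^ 2 + ‖p0 a‖ ^ 2 := by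
    intro a
    rw [← real_inner_self_eq_norm_sq a]
    conv_lhs => rw [show (⟪a, a⟫ : ℝ) = ⟪a, pp a + pm a + p0 a⟫ by rw [← hdecomp a]]
    rw [inner_add_right, inner_add_right, key1 a a, key2 a a, key0 a a,
      real_inner_self_eq_norm_sq, real_inner_self_eq_norm_sq, real_inner_self_eq_norm_sq]
  -- boundedness from weak convergence (Banach–Steinhaus)
  obtain ⟨M, hM⟩ : ∃ M : ℝ, ∀ n, ‖u n‖ ≤ M := by
    have hbdd : ∀ x : E, ∃ C, ∀ n : ℕ, ‖(innerSL ℝ (u n)) x‖ ≤ C := by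
      intro x
      obtain ⟨C, hC⟩ := (hweak x).norm.bddAbove_range
      exact ⟨C, fun n => by simpa using hC (Set.mem_range_self n)⟩
    obtain ⟨C', hC'⟩ := banach_steinhaus hbdd
    exact ⟨C', fun n => by simpa using hC' n⟩
  -- L² smallness
  have hsnn : ∀ n, (0:ℝ) ≤ (∫ t, ‖j (u n - u₀) t‖ ^ 2) ^ ((1 : ℝ) / 2) := fun n =>
    Real.rpow_nonneg (integral_nonneg fun t => by positivity) _
  have hjw : ∀ n t, j (u n - u₀) t = j (u n) t - j u₀ t := by
    intro n t; rw [map_sub]; rfl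
  have hsconv : Tendsto (fun n => (∫ t, ‖j (u n - u₀) t‖ ^ 2) ^ ((1 : ℝ) / 2))
      atTop (nhds 0) := by
    have h1 : Tendsto (fun n => ∫ t, ‖j (u n - u₀) t‖ ^ 2) atTop (nhds 0) := by
      refine hL2conv.congr fun n => ?_
      refine integral_congr_ae (ae_of_all _ fun t => ?_)
      simp only [hjw n t]
    have hc : ContinuousAt (fun x : ℝ => x ^ ((1 : ℝ) / 2)) 0 :=
      Real.continuousAt_rpow_const 0 _ (Or.inr (by norm_num))
    have h2 := hc.tendsto.comp h1
    simpa [Real.zero_rpow, Function.comp_def] using h2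
  -- Riesz representation of I' u₀
  set z : E := (InnerProductSpace.toDual ℝ E).symm (I' u₀) with hz
  have hIz : ∀ x : E, I' u₀ x = ⟪z, x⟫ := by
    intro x; rw [hz]; exact (InnerProductSpace.toDual_symm_apply).symm
  -- finite-dimensional part
  have hmemF : ∀ n, pm (u n - u₀) + p0 (u n - u₀) ∈ (Em ⊔ E0 : Submodule ℝ E) := fun n =>
    Submodule.add_mem _ (Submodule.mem_sup_left (hpm _)) (Submodule.mem_sup_right (hp0 _))
  have hvweak : ∀ x : E,
      Tendsto (fun n => ⟪((⟨pm (u n - u₀) + p0 (u n - u₀), hmemF n⟩ :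
        (Em ⊔ E0 : Submodule ℝ E)) : E), x⟫) atTop (nhds 0) := by
    intro x
    have heq : ∀ n, ⟪pm (u n - u₀) + p0 (u n - u₀), x⟫ = ⟪u n - u₀, pm x + p0 x⟫ := by
      intro n
      have e1 : ⟪pm (u n - u₀), x⟫ = ⟪u n - u₀, pm x⟫ := by
        calc ⟪pm (u n - u₀), x⟫ = ⟪x, pm (u n - u₀)⟫ := real_inner_comm _ _
          _ = ⟪pm x, pm (u n - u₀)⟫ := key2 x _
          _ = ⟪pm (u n - u₀), pm x⟫ := real_inner_comm _ _
          _ = ⟪u n - u₀, pm x⟫ := (key2 _ x).symm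
      have e0 : ⟪p0 (u n - u₀), x⟫ = ⟪u n - u₀, p0 x⟫ := by
        calc ⟪p0 (u n - u₀), x⟫ = ⟪x, p0 (u n - u₀)⟫ := real_inner_comm _ _
          _ = ⟪p0 x, p0 (u n - u₀)⟫ := key0 x _
          _ = ⟪p0 (u n - u₀), p0 x⟫ := real_inner_comm _ _
          _ = ⟪u n - u₀, p0 x⟫ := (key0 _ x).symm
      rw [inner_add_left, e1, e0, ← inner_add_right]
    have h1 := hweak0 (pm x + p0 x)
    refine Tendsto.congr (fun n => ?_) h1
    exact (heq n).symm
  have hvconv := myFinDimWeak (F := (Em ⊔ E0 : Submodule ℝ E))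
    (fun n => ⟨pm (u n - u₀) + p0 (u n - u₀), hmemF n⟩) hvweak
  have hq : Tendsto (fun n => ‖pm (u n - u₀) + p0 (u n - u₀)‖ ^ 2) atTop (nhds 0) := by
    have h1 : Tendsto (fun n => ‖pm (u n - u₀) + p0 (u n - u₀)‖) atTop (nhds 0) := by
      simpa using hvconv.norm
    simpa using h1.pow 2
  have hqeq : ∀ n, ‖pm (u n - u₀) + p0 (u n - u₀)‖ ^ 2 =
      ‖pm (u n - u₀)‖ ^ 2 + ‖p0 (u n - u₀)‖ ^ 2 := by
    intro n
    rw [norm_add_sq_real, (horth _ _).2.2]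
    ring
  -- the main identity
  have hid : ∀ n, ‖pp (u n - u₀)‖ ^ 2 =
      I' (u n) (u n - u₀) - I' u₀ (u n - u₀) + ‖pm (u n - u₀)‖ ^ 2 +
      ((∫ t, ⟪gW t (j (u n) t), j (u n - u₀) t⟫) -
       (∫ t, ⟪gW t (j u₀ t), j (u n - u₀) t⟫)) := by
    intro n
    have h1 := hI' (u n) (u n - u₀)
    have h2 := hI' u₀ (u n - u₀)
    have e1 : ⟪pp (u n), pp (u n - u₀)⟫ - ⟪pp u₀, pp (u n - u₀)⟫ = ‖pp (u n - u₀)‖ ^ 2 := by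
      rw [← key1 (u n) (u n - u₀), ← key1 u₀ (u n - u₀), ← inner_sub_left,
        key1 (u n - u₀) (u n - u₀), real_inner_self_eq_norm_sq]
    have e2 : ⟪pm (u n), pm (u n - u₀)⟫ - ⟪pm u₀, pm (u n - u₀)⟫ = ‖pm (u n - u₀)‖ ^ 2 := by
      rw [← key2 (u n) (u n - u₀), ← key2 u₀ (u n - u₀), ← inner_sub_left,
        key2 (u n - u₀) (u n - u₀), real_inner_self_eq_norm_sq]
    linarith
  -- bounds on the nonlinear terms
  have bndA : ∀ n, |∫ t, ⟪gW t (j (u n) t), j (u n - u₀) t⟫| ≤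
      b₁ * (C₂ * M) * (∫ t, ‖j (u n - u₀) t‖ ^ 2) ^ ((1 : ℝ) / 2) := by
    intro n
    have h1 := myGWBound hb₁.le (fun t => hgW t (j (u n) t)) (hjL2 (u n)) (hjL2 (u n - u₀))
    calc |∫ t, ⟪gW t (j (u n) t), j (u n - u₀) t⟫| ≤
        b₁ * ((∫ t, ‖j (u n) t‖ ^ 2) ^ ((1 : ℝ) / 2) *
          (∫ t, ‖j (u n - u₀) t‖ ^ 2) ^ ((1 : ℝ) / 2)) := h1
      _ ≤ b₁ * ((C₂ * M) * (∫ t, ‖j (u n - u₀) t‖ ^ 2) ^ ((1 : ℝ) / 2)) := by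
          refine mul_le_mul_of_nonneg_left ?_ hb₁.le
          refine mul_le_mul_of_nonneg_right ?_ (hsnn n)
          exact le_trans (hjbound (u n)) (mul_le_mul_of_nonneg_left (hM n) hC₂.le)
      _ = b₁ * (C₂ * M) * (∫ t, ‖j (u n - u₀) t‖ ^ 2) ^ ((1 : ℝ) / 2) := by ring
  have bndB : ∀ n, |∫ t, ⟪gW t (j u₀ t), j (u n - u₀) t⟫| ≤
      b₁ * (C₂ * ‖u₀‖) * (∫ t, ‖j (u n - u₀) t‖ ^ 2) ^ ((1 : ℝ) / 2) := by
    intro n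
    have h1 := myGWBound hb₁.le (fun t => hgW t (j u₀ t)) (hjL2 u₀) (hjL2 (u n - u₀))
    calc |∫ t, ⟪gW t (j u₀ t), j (u n - u₀) t⟫| ≤
        b₁ * ((∫ t, ‖j u₀ t‖ ^ 2) ^ ((1 : ℝ) / 2) *
          (∫ t, ‖j (u n - u₀) t‖ ^ 2) ^ ((1 : ℝ) / 2)) := h1
      _ ≤ b₁ * ((C₂ * ‖u₀‖) * (∫ t, ‖j (u n - u₀) t‖ ^ 2) ^ ((1 : ℝ) / 2)) := by
          refine mul_le_mul_of_nonneg_left ?_ hb₁.le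
          exact mul_le_mul_of_nonneg_right (hjbound u₀) (hsnn n)
      _ = b₁ * (C₂ * ‖u₀‖) * (∫ t, ‖j (u n - u₀) t‖ ^ 2) ^ ((1 : ℝ) / 2) := by ring
  -- bound on the PS term
  have hwb : ∀ n, ‖u n - u₀‖ ≤ M + ‖u₀‖ := fun n =>
    le_trans (norm_sub_le _ _) (add_le_add_left (hM n) _)
  have hIb : ∀ n, |I' (u n) (u n - u₀)| ≤ ‖I' (u n)‖ * (M + ‖u₀‖) := by
    intro n
    rw [← Real.norm_eq_abs]
    exact le_trans ((I' (u n)).le_opNorm (u n - u₀))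
      (mul_le_mul_of_nonneg_left (hwb n) (norm_nonneg _))
  -- the final bound
  have final : ∀ n, ‖u n - u₀‖ ^ 2 ≤
      ‖I' (u n)‖ * (M + ‖u₀‖) + |⟪z, u n - u₀⟫| +
      2 * ‖pm (u n - u₀) + p0 (u n - u₀)‖ ^ 2 +
      (b₁ * (C₂ * M) * (∫ t, ‖j (u n - u₀) t‖ ^ 2) ^ ((1 : ℝ) / 2) +
       b₁ * (C₂ * ‖u₀‖) * (∫ t, ‖j (u n - u₀) t‖ ^ 2) ^ ((1 : ℝ) / 2)) := by
    intro n
    have p1 := pyth (u n - u₀)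
    have p2 := hid n
    have p3 := hIb n
    have p4 := bndA n
    have p5 := bndB n
    have p6 : |I' u₀ (u n - u₀)| = |⟪z, u n - u₀⟫| := by rw [hIz]
    have p7 := le_abs_self (I' (u n) (u n - u₀))
    have p8 := neg_abs_le (I' u₀ (u n - u₀))
    have p9 := le_abs_self (∫ t, ⟪gW t (j (u n) t), j (u n - u₀) t⟫)
    have p10 := neg_abs_le (∫ t, ⟪gW t (j u₀ t), j (u n - u₀) t⟫)
    have p11 := hqeq n
    have p12 : (0:ℝ) ≤ ‖p0 (u n - u₀)‖ ^ 2 := sq_nonneg _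
    linarith
  -- right-hand side tends to zero
  have hrhs : Tendsto (fun n =>
      ‖I' (u n)‖ * (M + ‖u₀‖) + |⟪z, u n - u₀⟫| +
      2 * ‖pm (u n - u₀) + p0 (u n - u₀)‖ ^ 2 +
      (b₁ * (C₂ * M) * (∫ t, ‖j (u n - u₀) t‖ ^ 2) ^ ((1 : ℝ) / 2) +
       b₁ * (C₂ * ‖u₀‖) * (∫ t, ‖j (u n - u₀) t‖ ^ 2) ^ ((1 : ℝ) / 2)))
      atTop (nhds 0) := by
    have t1 := hPS.mul_const (M + ‖u₀‖)
    have t2 : Tendsto (fun n => |⟪z, u n - u₀⟫|) atTop (nhds 0) := by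
      have h1 := (hweak0 z).abs
      simp only [abs_zero] at h1
      refine h1.congr fun n => ?_
      rw [real_inner_comm]
    have t3 := hq.const_mul (2:ℝ)
    have t4 := (hsconv.const_mul (b₁ * (C₂ * M))).add (hsconv.const_mul (b₁ * (C₂ * ‖u₀‖)))
    have := ((t1.add t2).add t3).add t4
    simpa using this
  -- squeeze
  have hsq : Tendsto (fun n => ‖u n - u₀‖ ^ 2) atTop (nhds 0) :=
    squeeze_zero (fun n => sq_nonneg _) final hrhs
  have hnrm : Tendsto (fun n => ‖u n - u₀‖) atTop (nhds 0) := by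
    have h1 := (Real.continuous_sqrt.tendsto 0).comp hsq
    simp only [Function.comp_def, Real.sqrt_zero] at h1
    refine h1.congr fun n => ?_
    exact Real.sqrt_sq (norm_nonneg _)
  rw [tendsto_iff_norm_sub_tendsto_zero]
  exact hnrm
end

section
/- Let (u_n) ⊂ E be a sequence in a Hilbert space E ⊂ L²(ℝ,ℝ^N) with ‖·‖_{L^p} ≤ C_p‖·‖ for all p ∈ [1,∞], and let E⁻ ⊕ E⁰ be a finite-dimensional subspace on which all norms are equivalent. Suppose there exist constants M₃, b₂, b₃ > 0, r₁ > 0 and μ > 1 with b₂ ∫_{\{|u_n| ≥ r₁\}} |u_n|^μ dt ≤ 2M₃ + M₃‖u_n‖ + b₃‖u_n‖_{L¹} for all n, and ‖u_n‖ → ∞. Writing w_n = u_n · 1_{\{|u_n| ≥ r₁\}}, one has ‖u_n⁻ + u_n⁰‖ ≤ M₆(1 + ‖u_n‖^{1/μ}) for some constant M₆ > 0, and consequently ‖u_n⁻ + u_n⁰‖/‖u_n‖ → 0 as n → ∞. -/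
open MeasureTheory Real Filter RealInnerProductSpace

set_option maxHeartbeats 1000000

/-- Boundedness of the finite-dimensional part of a (PS) sequence: under the
integral estimate `b₂ ∫_{|u_n|≥r₁} |u_n|^μ ≤ 2M₃ + M₃‖u_n‖ + b₃‖u_n‖_{L¹}` and
`‖u_n‖ → ∞`, one has `‖u_n⁻ + u_n⁰‖ ≤ M₆(1 + ‖u_n‖^{1/μ})` and hence
`‖u_n⁻ + u_n⁰‖/‖u_n‖ → 0`. -/
theorem stmt_12 {N : ℕ} {E : Type*} [NormedAddCommGroup E] [InnerProductSpace ℝ E]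
    [CompleteSpace E]
    (F : Submodule ℝ E) (hfin : FiniteDimensional ℝ F)
    (j : E →ₗ[ℝ] (ℝ → EuclideanSpace ℝ (Fin N)))
    (Cp : ENNReal → ℝ)
    (hCp : ∀ p : ENNReal, 1 ≤ p → ∀ u : E,
      eLpNorm (j u) p (volume : Measure ℝ) ≤ ENNReal.ofReal (Cp p * ‖u‖))
    (hL2orth : ∀ v : E,
      ∫ t, ⟪j ((F.orthogonalProjection v : E)) t, j v t⟫ =
        ∫ t, ‖j ((F.orthogonalProjection v : E)) t‖ ^ 2)
    (M₅ : ℝ) (hM₅ : 0 < M₅)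
    (hEq : ∀ v ∈ F, ‖v‖ ≤ M₅ * (∫ t, ‖j v t‖ ^ 2) ^ ((1 : ℝ) / 2))
    (u : ℕ → E)
    (M₃ b₂ b₃ r₁ μ : ℝ)
    (hM₃ : 0 < M₃) (hb₂ : 0 < b₂) (hb₃ : 0 < b₃) (hr₁ : 0 < r₁) (hμ : 1 < μ)
    (hintμ : ∀ n, IntegrableOn (fun t => ‖j (u n) t‖ ^ μ)
      {t : ℝ | r₁ ≤ ‖j (u n) t‖} volume)
    (hintL1 : ∀ n, Integrable (fun t => ‖j (u n) t‖) (volume : Measure ℝ))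
    (hkey : ∀ n, b₂ * ∫ t in {t : ℝ | r₁ ≤ ‖j (u n) t‖}, ‖j (u n) t‖ ^ μ ≤
      2 * M₃ + M₃ * ‖u n‖ + b₃ * ∫ t, ‖j (u n) t‖)
    (hdiv : Tendsto (fun n => ‖u n‖) atTop atTop) :
    (∃ M₆ : ℝ, 0 < M₆ ∧ ∀ n,
      ‖(F.orthogonalProjection (u n) : E)‖ ≤ M₆ * (1 + ‖u n‖ ^ ((1 : ℝ) / μ))) ∧
      Tendsto (fun n => ‖(F.orthogonalProjection (u n) : E)‖ / ‖u n‖) atTop (nhds 0) := by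
  have hμ0 : (0:ℝ) < μ := lt_trans one_pos hμ
  set q : ℝ := μ / (μ - 1) with hqdef
  have hconj : Real.HolderConjugate μ q := Real.HolderConjugate.conjExponent hμ
  have hq1 : 1 < q := by rw [hqdef, lt_div_iff₀ (by linarith)]; linarith
  have hq0 : (0:ℝ) < q := lt_trans one_pos hq1
  set C1 : ℝ := max (Cp 1) 0 with hC1def
  set Cq : ℝ := max (Cp (ENNReal.ofReal q)) 0 with hCqdef
  have hC1_0 : 0 ≤ C1 := le_max_right _ _
  have hCq_0 : 0 ≤ Cq := le_max_right _ _
  set K : ℝ := (2 * M₃ + M₃ + b₃ * C1) / b₂ with hKdef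
  have hK0 : 0 < K := by positivity
  set c : ℝ := r₁ * C1 + Cq * K ^ ((1:ℝ)/μ) with hcdef
  have hc0 : 0 ≤ c :=
    add_nonneg (mul_nonneg hr₁.le hC1_0) (mul_nonneg hCq_0 (Real.rpow_nonneg hK0.le _))
  set M₆ : ℝ := M₅ ^ 2 * c + 1 with hM₆def
  have hM₆0 : 0 < M₆ := by positivity
  have key : ∀ n, ‖(F.orthogonalProjection (u n) : E)‖ ≤ M₆ * (1 + ‖u n‖ ^ ((1:ℝ)/μ)) := by
    intro n
    have hs0 : (0:ℝ) ≤ ‖u n‖ ^ ((1:ℝ)/μ) := Real.rpow_nonneg (norm_nonneg _) _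
    have hRHS1 : (1:ℝ) ≤ 1 + ‖u n‖ ^ ((1:ℝ)/μ) := by linarith
    have hL2n := hL2orth (u n)
    have hEqn := hEq _ (Submodule.coe_mem (F.orthogonalProjection (u n)))
    set P : E := (F.orthogonalProjection (u n) : E) with hPdef
    set g : ℝ → EuclideanSpace ℝ (Fin N) := j P with hgdef
    set f : ℝ → EuclideanSpace ℝ (Fin N) := j (u n) with hfdef
    have hI0 : 0 ≤ ∫ t, ‖g t‖ ^ 2 := integral_nonneg fun t => sq_nonneg _
    -- trivial case helper
    have htriv : ‖P‖ ≤ 0 → ‖P‖ ≤ M₆ * (1 + ‖u n‖ ^ ((1:ℝ)/μ)) := by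
      intro h
      calc ‖P‖ ≤ 0 := h
        _ ≤ M₆ * (1 + ‖u n‖ ^ ((1:ℝ)/μ)) := by nlinarith
    by_cases hg2 : Integrable (fun t => ‖g t‖ ^ 2) (volume : Measure ℝ)
    swap
    · refine htriv ?_
      rw [integral_undef hg2] at hEqn
      simpa [Real.zero_rpow (by norm_num : ((1:ℝ)/2) ≠ 0)] using hEqn
    by_cases hφ : Integrable (fun t => ⟪g t, f t⟫) (volume : Measure ℝ)
    swap
    · refine htriv ?_
      rw [integral_undef hφ] at hL2n
      rw [← hL2n] at hEqn
      simpa [Real.zero_rpow (by norm_num : ((1:ℝ)/2) ≠ 0)] using hEqn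
    -- measurability
    have hGae : AEMeasurable (fun t => ENNReal.ofReal ‖g t‖) (volume : Measure ℝ) := by
      have h1 : AEMeasurable (fun t => ‖g t‖ ^ 2) (volume : Measure ℝ) :=
        hg2.aestronglyMeasurable.aemeasurable
      have h2 : AEMeasurable (fun t => ‖g t‖) (volume : Measure ℝ) := by
        have := Real.continuous_sqrt.measurable.comp_aemeasurable h1
        simpa [Function.comp_def, Real.sqrt_sq (norm_nonneg _)] using this
      exact ENNReal.measurable_ofReal.comp_aemeasurable h2
    have hFae : AEMeasurable (fun t => ENNReal.ofReal ‖f t‖) (volume : Measure ℝ) :=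
      ENNReal.measurable_ofReal.comp_aemeasurable (hintL1 n).aestronglyMeasurable.aemeasurable
    set G₀ : ℝ → ENNReal := hGae.mk _ with hG₀def
    set F₀ : ℝ → ENNReal := hFae.mk _ with hF₀def
    have hG₀m : Measurable G₀ := hGae.measurable_mk
    have hF₀m : Measurable F₀ := hFae.measurable_mk
    have hG₀e : (fun t => ENNReal.ofReal ‖g t‖) =ᵐ[volume] G₀ := hGae.ae_eq_mk
    have hF₀e : (fun t => ENNReal.ofReal ‖f t‖) =ᵐ[volume] F₀ := hFae.ae_eq_mk
    set S' : Set ℝ := {t | ENNReal.ofReal r₁ ≤ F₀ t} with hS'def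
    have hS'm : MeasurableSet S' := measurableSet_le measurable_const hF₀m
    have hSS' : {t : ℝ | r₁ ≤ ‖f t‖} =ᵐ[volume] S' := by
      rw [Filter.eventuallyEq_set]
      filter_upwards [hF₀e] with t ht
      simp only [Set.mem_setOf_eq, hS'def, ← ht,
        ENNReal.ofReal_le_ofReal_iff (norm_nonneg _)]
    -- L¹ bound for f
    have hL1f : ∫ t, ‖f t‖ ≤ C1 * ‖u n‖ := by
      have h1 : ENNReal.ofReal (∫ t, ‖f t‖) = ∫⁻ t, ENNReal.ofReal ‖f t‖ :=
        ofReal_integral_eq_lintegral_ofReal (hintL1 n) (ae_of_all _ fun t => norm_nonneg _)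
      have h2 : (∫⁻ t, ENNReal.ofReal ‖f t‖) ≤ ENNReal.ofReal (C1 * ‖u n‖) := by
        have := hCp 1 le_rfl (u n)
        rw [eLpNorm_one_eq_lintegral_enorm] at this
        simp only [← ofReal_norm_eq_enorm] at this
        exact this.trans (ENNReal.ofReal_le_ofReal
          (mul_le_mul_of_nonneg_right (le_max_left _ _) (norm_nonneg _)))
      have h3 : ENNReal.ofReal (∫ t, ‖f t‖) ≤ ENNReal.ofReal (C1 * ‖u n‖) := h1 ▸ h2
      exact (ENNReal.ofReal_le_ofReal_iff (by positivity)).1 h3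
    -- the key real bound on the restricted integral
    have hrealS : ∫ t in {t : ℝ | r₁ ≤ ‖f t‖}, ‖f t‖ ^ μ ≤ K * (1 + ‖u n‖) := by
      have h1 := hkey n
      have h2 : b₂ * ∫ t in {t : ℝ | r₁ ≤ ‖f t‖}, ‖f t‖ ^ μ ≤
          (2 * M₃ + M₃ + b₃ * C1) * (1 + ‖u n‖) := by
        have hv0 : (0:ℝ) ≤ ‖u n‖ := norm_nonneg _
        nlinarith [mul_le_mul_of_nonneg_left hL1f hb₃.le]
      rw [hKdef]
      rw [div_mul_eq_mul_div, le_div_iff₀ hb₂]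
      linarith
    -- lintegral bound over S'
    have hSbound : ∫⁻ t in S', F₀ t ^ μ ≤ ENNReal.ofReal (K * (1 + ‖u n‖)) := by
      have e1 : ∫⁻ t in S', F₀ t ^ μ = ∫⁻ t in S', ENNReal.ofReal ‖f t‖ ^ μ := by
        refine lintegral_congr_ae ?_
        filter_upwards [ae_restrict_of_ae hF₀e] with t ht
        rw [ht]
      have e2 : (volume : Measure ℝ).restrict S' =
          (volume : Measure ℝ).restrict {t : ℝ | r₁ ≤ ‖f t‖} :=
        (Measure.restrict_congr_set hSS').symm
      rw [e1, e2]
      have e3 : ∫⁻ t in {t : ℝ | r₁ ≤ ‖f t‖}, ENNReal.ofReal ‖f t‖ ^ μ =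
          ∫⁻ t in {t : ℝ | r₁ ≤ ‖f t‖}, ENNReal.ofReal (‖f t‖ ^ μ) := by
        refine lintegral_congr fun t => ?_
        rw [ENNReal.ofReal_rpow_of_nonneg (norm_nonneg _) hμ0.le]
      rw [e3, ← ofReal_integral_eq_lintegral_ofReal (hintμ n)
        (ae_of_all _ fun t => Real.rpow_nonneg (norm_nonneg _) _)]
      exact ENNReal.ofReal_le_ofReal hrealS
    -- L¹ and Lq bounds for g
    have hg1 : ∫⁻ t, G₀ t ≤ ENNReal.ofReal (C1 * ‖P‖) := by
      rw [lintegral_congr_ae hG₀e.symm]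
      have := hCp 1 le_rfl P
      rw [eLpNorm_one_eq_lintegral_enorm] at this
      simp only [← ofReal_norm_eq_enorm] at this
      exact this.trans (ENNReal.ofReal_le_ofReal
        (mul_le_mul_of_nonneg_right (le_max_left _ _) (norm_nonneg _)))
    have hgq : (∫⁻ t, G₀ t ^ q) ^ ((1:ℝ)/q) ≤ ENNReal.ofReal (Cq * ‖P‖) := by
      have e1 : ∫⁻ t, G₀ t ^ q = ∫⁻ t, ENNReal.ofReal ‖g t‖ ^ q := by
        refine lintegral_congr_ae ?_
        filter_upwards [hG₀e] with t ht
        rw [ht]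
      have h1 : (1:ENNReal) ≤ ENNReal.ofReal q := by
        rw [ENNReal.one_le_ofReal]; exact hq1.le
      have h2 := hCp (ENNReal.ofReal q) h1 P
      rw [eLpNorm_eq_lintegral_rpow_enorm_toReal (by simp [hq0] : ENNReal.ofReal q ≠ 0)
        ENNReal.ofReal_ne_top] at h2
      rw [ENNReal.toReal_ofReal hq0.le] at h2
      simp only [← ofReal_norm_eq_enorm] at h2
      rw [e1]
      exact h2.trans (ENNReal.ofReal_le_ofReal
        (mul_le_mul_of_nonneg_right (le_max_left _ _) (norm_nonneg _)))
    -- pointwise inequality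
    have hpw : ∀ t, G₀ t * F₀ t ≤
        ENNReal.ofReal r₁ * G₀ t + S'.indicator (fun t => G₀ t * F₀ t) t := by
      intro t
      by_cases ht : t ∈ S'
      · rw [Set.indicator_of_mem ht]
        exact le_add_self
      · rw [Set.indicator_of_notMem ht, add_zero]
        have hle : F₀ t ≤ ENNReal.ofReal r₁ := (not_le.1 ht).le
        calc G₀ t * F₀ t ≤ G₀ t * ENNReal.ofReal r₁ := mul_le_mul_right hle _
          _ = ENNReal.ofReal r₁ * G₀ t := mul_comm _ _
    -- Hölder
    have hHolder : ∫⁻ t in S', G₀ t * F₀ t ≤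
        ENNReal.ofReal (Cq * ‖P‖) * ENNReal.ofReal ((K * (1 + ‖u n‖)) ^ ((1:ℝ)/μ)) := by
      have h := ENNReal.lintegral_mul_le_Lp_mul_Lq ((volume : Measure ℝ).restrict S')
        hconj.symm hG₀m.aemeasurable hF₀m.aemeasurable
      refine h.trans (mul_le_mul' ?_ ?_)
      · refine le_trans ?_ hgq
        exact ENNReal.rpow_le_rpow (setLIntegral_le_lintegral _ _) (by positivity)
      · calc (∫⁻ t in S', F₀ t ^ μ) ^ ((1:ℝ)/μ)
            ≤ (ENNReal.ofReal (K * (1 + ‖u n‖))) ^ ((1:ℝ)/μ) :=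
              ENNReal.rpow_le_rpow hSbound (by positivity)
          _ = ENNReal.ofReal ((K * (1 + ‖u n‖)) ^ ((1:ℝ)/μ)) :=
              ENNReal.ofReal_rpow_of_nonneg (by positivity) (by positivity)
    -- putting the lintegral chain together
    set D : ℝ := r₁ * C1 + Cq * (K * (1 + ‖u n‖)) ^ ((1:ℝ)/μ) with hDdef
    have hD0 : 0 ≤ D := by positivity
    have hchain : ∫⁻ t, ENNReal.ofReal ‖⟪g t, f t⟫‖ ≤ ENNReal.ofReal (‖P‖ * D) := by
      calc ∫⁻ t, ENNReal.ofReal ‖⟪g t, f t⟫‖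
          ≤ ∫⁻ t, G₀ t * F₀ t := by
            refine lintegral_mono_ae ?_
            filter_upwards [hG₀e, hF₀e] with t htg htf
            rw [← htg, ← htf, ← ENNReal.ofReal_mul (norm_nonneg _)]
            exact ENNReal.ofReal_le_ofReal (norm_inner_le_norm _ _)
        _ ≤ ∫⁻ t, (ENNReal.ofReal r₁ * G₀ t + S'.indicator (fun t => G₀ t * F₀ t) t) :=
            lintegral_mono hpw
        _ = (∫⁻ t, ENNReal.ofReal r₁ * G₀ t) + ∫⁻ t, S'.indicator (fun t => G₀ t * F₀ t) t :=
            lintegral_add_left (measurable_const.mul hG₀m) _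
        _ = ENNReal.ofReal r₁ * (∫⁻ t, G₀ t) + ∫⁻ t in S', G₀ t * F₀ t := by
            rw [lintegral_const_mul _ hG₀m, lintegral_indicator hS'm]
        _ ≤ ENNReal.ofReal r₁ * ENNReal.ofReal (C1 * ‖P‖) +
            ENNReal.ofReal (Cq * ‖P‖) * ENNReal.ofReal ((K * (1 + ‖u n‖)) ^ ((1:ℝ)/μ)) :=
            add_le_add (mul_le_mul_right hg1 _) hHolder
        _ = ENNReal.ofReal (r₁ * (C1 * ‖P‖) +
            (Cq * ‖P‖) * ((K * (1 + ‖u n‖)) ^ ((1:ℝ)/μ))) := by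
            rw [← ENNReal.ofReal_mul hr₁.le, ← ENNReal.ofReal_mul (by positivity),
              ← ENNReal.ofReal_add (by positivity) (by positivity)]
        _ = ENNReal.ofReal (‖P‖ * D) := by
            rw [hDdef]; ring_nf
    -- real chain
    have hIP : (∫ t, ‖g t‖ ^ 2) ≤ ‖P‖ * D := by
      calc (∫ t, ‖g t‖ ^ 2) = ∫ t, ⟪g t, f t⟫ := hL2n.symm
        _ ≤ ‖∫ t, ⟪g t, f t⟫‖ := le_abs_self _
        _ ≤ (∫⁻ t, ENNReal.ofReal ‖⟪g t, f t⟫‖).toReal := norm_integral_le_lintegral_norm _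
        _ ≤ (ENNReal.ofReal (‖P‖ * D)).toReal :=
            ENNReal.toReal_mono ENNReal.ofReal_ne_top hchain
        _ = ‖P‖ * D := ENNReal.toReal_ofReal (by positivity)
    -- square the energy bound
    have hsq : ‖P‖ ^ 2 ≤ M₅ ^ 2 * (‖P‖ * D) := by
      have h1 : ‖P‖ ^ 2 ≤ (M₅ * (∫ t, ‖g t‖ ^ 2) ^ ((1:ℝ)/2)) ^ 2 :=
        pow_le_pow_left₀ (norm_nonneg _) hEqn 2
      have h2 : ((∫ t, ‖g t‖ ^ 2) ^ ((1:ℝ)/2)) ^ 2 = ∫ t, ‖g t‖ ^ 2 := by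
        rw [← Real.rpow_natCast ((∫ t, ‖g t‖ ^ 2) ^ ((1:ℝ)/2)) 2, ← Real.rpow_mul hI0]
        norm_num
      rw [mul_pow, h2] at h1
      exact h1.trans (by nlinarith)
    have hPD : ‖P‖ ≤ M₅ ^ 2 * D := by
      rcases eq_or_lt_of_le (norm_nonneg P) with h0 | h0
      · rw [← h0]; positivity
      · have : ‖P‖ * ‖P‖ ≤ (M₅ ^ 2 * D) * ‖P‖ := by nlinarith
        exact le_of_mul_le_mul_right this h0
    -- bound D
    have hDb : D ≤ c * (1 + ‖u n‖ ^ ((1:ℝ)/μ)) := by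
      have h1 : (K * (1 + ‖u n‖)) ^ ((1:ℝ)/μ) =
          K ^ ((1:ℝ)/μ) * (1 + ‖u n‖) ^ ((1:ℝ)/μ) :=
        Real.mul_rpow hK0.le (by positivity)
      have h2 : (1 + ‖u n‖) ^ ((1:ℝ)/μ) ≤ 1 + ‖u n‖ ^ ((1:ℝ)/μ) := by
        have hp1 : (1:ℝ)/μ ≤ 1 := by
          rw [div_le_one hμ0]; exact hμ.le
        have := NNReal.rpow_add_le_add_rpow 1 ‖u n‖₊ (by positivity : (0:ℝ) ≤ 1/μ) hp1
        have hc := NNReal.coe_le_coe.2 this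
        push_cast [NNReal.coe_rpow] at hc
        simpa [NNReal.one_rpow] using hc
      rw [hDdef, hcdef, h1]
      have h3 : Cq * (K ^ ((1:ℝ)/μ) * (1 + ‖u n‖) ^ ((1:ℝ)/μ)) ≤
          Cq * K ^ ((1:ℝ)/μ) * (1 + ‖u n‖ ^ ((1:ℝ)/μ)) := by
        have hck : 0 ≤ Cq * K ^ ((1:ℝ)/μ) :=
          mul_nonneg hCq_0 (Real.rpow_nonneg hK0.le _)
        calc Cq * (K ^ ((1:ℝ)/μ) * (1 + ‖u n‖) ^ ((1:ℝ)/μ))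
            = Cq * K ^ ((1:ℝ)/μ) * (1 + ‖u n‖) ^ ((1:ℝ)/μ) := by ring
          _ ≤ Cq * K ^ ((1:ℝ)/μ) * (1 + ‖u n‖ ^ ((1:ℝ)/μ)) :=
              mul_le_mul_of_nonneg_left h2 hck
      nlinarith [mul_nonneg (mul_nonneg hr₁.le hC1_0) hs0]
    calc ‖P‖ ≤ M₅ ^ 2 * D := hPD
      _ ≤ M₅ ^ 2 * (c * (1 + ‖u n‖ ^ ((1:ℝ)/μ))) :=
          mul_le_mul_of_nonneg_left hDb (by positivity)
      _ ≤ M₆ * (1 + ‖u n‖ ^ ((1:ℝ)/μ)) := by rw [hM₆def]; nlinarith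
  refine ⟨⟨M₆, hM₆0, key⟩, ?_⟩
  -- second part : the quotient tends to zero
  have hev : ∀ᶠ n in atTop, (1:ℝ) ≤ ‖u n‖ := hdiv.eventually_ge_atTop 1
  have haux : Tendsto (fun x : ℝ => M₆ * (x⁻¹ + x ^ ((1:ℝ)/μ - 1))) atTop (nhds 0) := by
    have h1 : Tendsto (fun x : ℝ => x⁻¹ + x ^ ((1:ℝ)/μ - 1)) atTop (nhds (0 + 0)) := by
      refine Tendsto.add tendsto_inv_atTop_zero ?_
      have hpos : (0:ℝ) < 1 - 1/μ := by
        have : (1:ℝ)/μ < 1 := by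
          rw [div_lt_one hμ0]; exact hμ
        linarith
      have := tendsto_rpow_neg_atTop hpos
      refine this.congr' ?_
      filter_upwards with x
      norm_num
    simpa using h1.const_mul M₆
  refine squeeze_zero' (g := fun n => M₆ * ((‖u n‖)⁻¹ + ‖u n‖ ^ ((1:ℝ)/μ - 1))) ?_ ?_ ?_
  · filter_upwards with n
    exact div_nonneg (norm_nonneg _) (norm_nonneg _)
  · filter_upwards [hev] with n hn
    have hpos : (0:ℝ) < ‖u n‖ := lt_of_lt_of_le one_pos hn
    calc ‖(F.orthogonalProjection (u n) : E)‖ / ‖u n‖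
        ≤ M₆ * (1 + ‖u n‖ ^ ((1:ℝ)/μ)) / ‖u n‖ :=
          div_le_div_of_nonneg_right (key n) hpos.le |>.trans_eq rfl
      _ = M₆ * ((‖u n‖)⁻¹ + ‖u n‖ ^ ((1:ℝ)/μ - 1)) := by
          rw [Real.rpow_sub hpos, Real.rpow_one]
          field_simp
  · exact haux.comp hdiv
end
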